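/- Let H be a finite simple graph on n vertices whose vertex set is partitioned into cliques C_1, C_2, …, C_s such that any two vertices in the same clique C_i are adjacent in H and have exactly the same neighbors outside C_i (replication cliques). For each i, let n_i be the number of vertices in C_1 ∪ … ∪ C_{i−1} that are non-adjacent to the vertices of C_i (this number is the same for every vertex of C_i). Then ρ(H) ≤ n + Σ_{i=1}^{s} n_i. -/

import Mathlib

/-!
Let `Q` be the quotient graph of `H` on the cliques, so that `H` is the blow-up of `Q` in which
vertex `i` becomes the clique `C_i`. Let `G` be the blow-up of `Q` by cliques of sizes
`|C_i| + n_i`; it has `n + Σ n_i` vertices. Given a proper colouring of `G`, choose `|C_i|`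
vertices of the `i`-th clique of `G` for `i = 1, …, s` in turn, avoiding the colours already
chosen in earlier cliques that are non-adjacent to `C_i`. At most `n_i` colours are forbidden, and
the clique is rainbow, so enough vertices remain. The chosen vertices induce a copy of `H`, which
is rainbow: inside a clique and between adjacent cliques by properness, between non-adjacent
cliques by the choice.
-/

/-- `ArrowsR G H` (written `G →r H`) means: every proper vertex coloring of `G`
contains a rainbow induced subgraph isomorphic to `H`, i.e. an induced copy of `H`
(a graph embedding) whose vertices receive pairwise distinct colors. -/
def ArrowsR {α β : Type} (G : SimpleGraph α) (H : SimpleGraph β) : Prop :=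
  ∀ c : α → ℕ, (∀ u v : α, G.Adj u v → c u ≠ c v) →
    ∃ f : H ↪g G, Function.Injective fun h => c (f h)

noncomputable def rho {β : Type} (H : SimpleGraph β) : ℕ :=
  sInf {m : ℕ | ∃ G : SimpleGraph (Fin m), ArrowsR G H}

open Finset

lemma Finset.card_filter_sigma_fst_eq {ι : Type*} {α : ι → Type*} [DecidableEq ι] [Fintype ι]
    [∀ i, Fintype (α i)] (i : ι) : #{x : Σ j, α j | x.1 = i} = Fintype.card (α i) := by
  rw [← Fintype.card_subtype]
  exact Fintype.card_congr (Equiv.sigmaSubtype i)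

lemma Finset.card_le_card_filter_notMem_add {W κ : Type*} [DecidableEq κ] {c : W → κ}
    (B : Finset W) (hc : Set.InjOn c B) (F : Finset κ) : #B ≤ #{x ∈ B | c x ∉ F} + #F := by
  have hbad : #{x ∈ B | c x ∈ F} ≤ #F :=
    card_le_card_of_injOn c (fun x hx => (mem_filter.1 hx).2)
      (hc.mono fun x hx => (mem_filter.1 hx).1)
  have hsplit := card_filter_add_card_filter_not (s := B) (c · ∈ F)
  omega

lemma exists_embedding_forall_mem_fiber {ι V W : Type*} [Fintype V] [DecidableEq ι]
    (P : V → ι) (π : W → ι) (S : ι → Finset W) (hS : ∀ i, ∀ x ∈ S i, π x = i)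
    (hcard : ∀ i, #{v | P v = i} ≤ #(S i)) : ∃ f : V ↪ W, ∀ v, f v ∈ S (P v) := by
  have e (i : ι) : {v // P v = i} ↪ S i :=
    (Function.Embedding.nonempty_of_card_le (by simpa [Fintype.card_subtype] using hcard i)).some
  let f (v : V) : W := e (P v) ⟨v, rfl⟩
  have hf (v : V) (i : ι) (hv : P v = i) : f v = e i ⟨v, hv⟩ := by subst hv; rfl
  refine ⟨⟨f, fun v w h => ?_⟩, fun v => (e _ _).2⟩
  have hP : P v = P w := by
    rw [← hS _ _ (e (P v) ⟨v, rfl⟩).2, ← hS _ _ (e (P w) ⟨w, rfl⟩).2]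
    exact congrArg π h
  rw [hf v _ rfl, hf w _ hP.symm] at h
  exact congrArg Subtype.val ((e _).injective (Subtype.ext h))

namespace SimpleGraph

variable {ι V W : Type*}

def cliqueBlowup (Q : SimpleGraph ι) (P : V → ι) : SimpleGraph V where
  Adj v w := v ≠ w ∧ (P v = P w ∨ Q.Adj (P v) (P w))
  symm := ⟨fun _ _ h => ⟨h.1.symm, h.2.imp Eq.symm fun h => h.symm⟩⟩
  loopless := ⟨fun _ h => h.1 rfl⟩

@[simp]
lemma cliqueBlowup_adj (Q : SimpleGraph ι) (P : V → ι) (v w : V) :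
    (Q.cliqueBlowup P).Adj v w ↔ v ≠ w ∧ (P v = P w ∨ Q.Adj (P v) (P w)) :=
  Iff.rfl

def quotientGraph (H : SimpleGraph V) (P : V → ι) : SimpleGraph ι :=
  SimpleGraph.fromRel fun i j => ∃ v w, P v = i ∧ P w = j ∧ H.Adj v w

lemma eq_cliqueBlowup_quotientGraph (H : SimpleGraph V) (P : V → ι)
    (hclique : ∀ v w : V, v ≠ w → P v = P w → H.Adj v w)
    (hrepl : ∀ v w u : V, P v = P w → P u ≠ P v → (H.Adj v u ↔ H.Adj w u)) :
    H = (H.quotientGraph P).cliqueBlowup P := by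
  have hmove : ∀ v w v' w', P v' = P v → P w' = P w → P v ≠ P w → H.Adj v' w' → H.Adj v w := by
    intro v w v' w' hv hw hne h
    have h' : H.Adj v w' := (hrepl v' v w' hv (by rw [hw, hv]; exact hne.symm)).1 h
    exact ((hrepl w' w v hw (by rw [hw]; exact hne)).1 h'.symm).symm
  ext v w
  simp only [cliqueBlowup_adj, quotientGraph, fromRel_adj]
  by_cases hP : P v = P w
  · exact ⟨fun h => ⟨h.ne, Or.inl hP⟩, fun h => hclique v w h.1 hP⟩
  refine ⟨fun h => ⟨h.ne, Or.inr ⟨hP, Or.inl ⟨v, w, rfl, rfl, h⟩⟩⟩, ?_⟩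
  rintro ⟨-, hP' | ⟨-, ⟨v', w', hv, hw, h⟩ | ⟨w', v', hw, hv, h⟩⟩⟩
  · exact absurd hP' hP
  · exact hmove v w v' w' hv hw hP h
  · exact hmove v w v' w' hv hw hP h.symm

section Greedy

variable {κ : Type*} (Q : SimpleGraph ι) (π : W → ι) {c : W → κ}

lemma injOn_fiber_of_cliqueBlowup (hc : ∀ x y, (Q.cliqueBlowup π).Adj x y → c x ≠ c y) (i : ι) :
    Set.InjOn c {x | π x = i} := by
  intro x hx y hy hxy
  by_contra hne
  exact hc x y ⟨hne, Or.inl (hx.trans hy.symm)⟩ hxy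

theorem exists_rainbow_subsets_of_cliqueBlowup [LinearOrder ι] [Fintype ι] [Fintype W]
    [DecidableRel Q.Adj]
    (hc : ∀ x y, (Q.cliqueBlowup π).Adj x y → c x ≠ c y) (a : ι → ℕ)
    (ha : ∀ i, a i ≠ 0 → a i + ∑ j ∈ {j | j < i ∧ ¬Q.Adj j i}, a j ≤ #{x | π x = i}) :
    ∃ S : ι → Finset W, (∀ i, (∀ x ∈ S i, π x = i) ∧ #(S i) = a i) ∧
      Set.InjOn c (⋃ i, (S i : Set W)) := by
  classical
  suffices ∀ T : Finset ι, ∃ S : ι → Finset W,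
      (∀ i ∈ T, (∀ x ∈ S i, π x = i) ∧ #(S i) = a i) ∧ Set.InjOn c (T.biUnion S) by
    obtain ⟨S, hS, hinj⟩ := this univ
    exact ⟨S, fun i => hS i (mem_univ i), by simpa using hinj⟩
  intro T
  induction T using Finset.induction_on_max with
  | empty => exact ⟨fun _ => ∅, by simp, by simp⟩
  | insert i T hlt ih =>
    obtain ⟨S, hS, hinj⟩ := ih
    set B : Finset W := {x | π x = i}
    set F := ((T.filter (¬Q.Adj · i)).biUnion S).image c
    have hF : #F ≤ ∑ j ∈ {j | j < i ∧ ¬Q.Adj j i}, a j := calc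
      #F ≤ #((T.filter (¬Q.Adj · i)).biUnion S) := card_image_le
      _ ≤ ∑ j ∈ T.filter (¬Q.Adj · i), #(S j) := card_biUnion_le
      _ = ∑ j ∈ T.filter (¬Q.Adj · i), a j :=
        sum_congr rfl fun j hj => (hS j (mem_filter.1 hj).1).2
      _ ≤ _ := sum_le_sum_of_subset fun j hj => by
        simp only [mem_filter, mem_univ, true_and] at hj ⊢
        exact ⟨hlt j hj.1, hj.2⟩
    have hfree : a i ≤ #{x ∈ B | c x ∉ F} := by
      rcases eq_or_ne (a i) 0 with h0 | h0
      · simp [h0]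
      have hB := card_le_card_filter_notMem_add B
        ((injOn_fiber_of_cliqueBlowup Q π hc i).mono fun x hx => by simpa [B] using hx) F
      have : a i + _ ≤ #B := ha i h0
      omega
    obtain ⟨U, hUfree, hU⟩ := exists_subset_card_eq hfree
    have hUB : ∀ x ∈ U, π x = i := fun x hx => by simpa [B] using (mem_filter.1 (hUfree hx)).1
    have hsep : ∀ x ∈ U, ∀ y ∈ T.biUnion S, c x ≠ c y := by
      intro x hx y hy hxy
      obtain ⟨j, hj, hyj⟩ := mem_biUnion.1 hy
      have hxi : π x = i ∧ c x ∉ F := by simpa [B] using hUfree hx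
      have hyj' : π y = j := (hS j hj).1 y hyj
      by_cases hadj : Q.Adj j i
      · refine hc y x ⟨fun h => ?_, Or.inr (by rw [hxi.1, hyj']; exact hadj)⟩ hxy.symm
        exact (hlt j hj).ne (hyj' ▸ hxi.1 ▸ congrArg π h)
      · exact hxi.2 (hxy ▸ mem_image_of_mem c (mem_biUnion.2 ⟨j, mem_filter.2 ⟨hj, hadj⟩, hyj⟩))
    have hunion : (insert i T).biUnion (Function.update S i U) = U ∪ T.biUnion S := by
      rw [biUnion_insert, Function.update_self]
      exact congrArg _ (biUnion_congr rfl fun j hj => Function.update_of_ne (hlt j hj).ne _ _)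
    refine ⟨Function.update S i U, fun j hj => ?_, ?_⟩
    · rcases mem_insert.1 hj with rfl | hj
      · rw [Function.update_self]
        exact ⟨hUB, hU⟩
      · rw [Function.update_of_ne (hlt j hj).ne]
        exact hS j hj
    · rw [hunion, coe_union,
        Set.injOn_union (Set.disjoint_left.2 fun x hx hy => hsep x hx x hy rfl)]
      exact ⟨(injOn_fiber_of_cliqueBlowup Q π hc i).mono hUB, hinj, hsep⟩

end Greedy

variable {κ : Type*} (Q : SimpleGraph ι) {P : V → ι} {π : W → ι}

def Embedding.cliqueBlowup (f : V ↪ W) (hf : ∀ v, π (f v) = P v) :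
    Q.cliqueBlowup P ↪g Q.cliqueBlowup π where
  toEmbedding := f
  map_rel_iff' {v w} := by simp [hf, f.injective.ne_iff]

theorem exists_rainbow_embedding_cliqueBlowup [LinearOrder ι] [Fintype ι] [Fintype V] [Fintype W]
    [DecidableRel Q.Adj] {c : W → κ} (hc : ∀ x y, (Q.cliqueBlowup π).Adj x y → c x ≠ c y)
    (hcard : ∀ v, #{w | P w = P v} + #{u | P u < P v ∧ ¬Q.Adj (P u) (P v)} ≤ #{x | π x = P v}) :
    ∃ f : Q.cliqueBlowup P ↪g Q.cliqueBlowup π, Function.Injective (c ∘ f) := by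
  classical
  have hsum (i : ι) : ∑ j ∈ {j | j < i ∧ ¬Q.Adj j i}, #{v | P v = j} =
      #{u | P u < i ∧ ¬Q.Adj (P u) i} := by
    rw [card_eq_sum_card_fiberwise (f := P) (t := {j | j < i ∧ ¬Q.Adj j i})
      fun u hu => by simpa using hu]
    refine sum_congr rfl fun j hj => congrArg card ?_
    ext u
    simp only [mem_filter, mem_univ, true_and] at hj ⊢
    exact ⟨fun hu => ⟨hu ▸ hj, hu⟩, And.right⟩
  obtain ⟨S, hS, hinj⟩ := exists_rainbow_subsets_of_cliqueBlowup Q π hc (fun i => #{v | P v = i})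
    fun i hi => by
      obtain ⟨v, hv⟩ := (card_ne_zero.1 hi).exists_mem
      obtain rfl : P v = i := by simpa using hv
      exact hsum (P v) ▸ hcard v
  obtain ⟨f, hf⟩ := exists_embedding_forall_mem_fiber P π S (fun i => (hS i).1) fun i => (hS i).2.ge
  have hπ (v : V) : π (f v) = P v := (hS _).1 _ (hf v)
  refine ⟨Embedding.cliqueBlowup Q f hπ, fun v w h => f.injective ?_⟩
  exact hinj (Set.mem_iUnion.2 ⟨_, hf v⟩) (Set.mem_iUnion.2 ⟨_, hf w⟩) h

end SimpleGraph

theorem ArrowsR.of_iso {α α' β : Type} {G : SimpleGraph α} {G' : SimpleGraph α'}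
    {H : SimpleGraph β} (h : ArrowsR G H) (e : G ≃g G') : ArrowsR G' H := by
  intro c hc
  obtain ⟨f, hf⟩ := h (c ∘ e) fun u v huv => hc _ _ (e.map_adj_iff.2 huv)
  exact ⟨e.toEmbedding.comp f, hf⟩

lemma rho_le_card {α β : Type} [Fintype α] {G : SimpleGraph α} {H : SimpleGraph β}
    (h : ArrowsR G H) : rho H ≤ Fintype.card α :=
  Nat.sInf_le ⟨G.overFin rfl, h.of_iso (G.overFinIso rfl)⟩

theorem stmt11_general {V : Type} [Fintype V]
    (H : SimpleGraph V) [DecidableRel H.Adj]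
    (s : ℕ) (P : V → Fin s)
    (hclique : ∀ v w : V, v ≠ w → P v = P w → H.Adj v w)
    (hrepl : ∀ v w u : V, P v = P w → P u ≠ P v → (H.Adj v u ↔ H.Adj w u))
    (nn : Fin s → ℕ)
    (hnn : ∀ (i : Fin s) (v : V), P v = i →
      nn i = (Finset.univ.filter fun u => P u < i ∧ ¬ H.Adj u v).card) :
    rho H ≤ Fintype.card V + ∑ i : Fin s, nn i := by
  classical
  set Q := H.quotientGraph P
  have hH : H = Q.cliqueBlowup P := H.eq_cliqueBlowup_quotientGraph P hclique hrepl
  have hnn' (v : V) : #{u | P u < P v ∧ ¬Q.Adj (P u) (P v)} = nn (P v) := by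
    rw [hnn _ v rfl]
    refine congrArg card (filter_congr fun u _ => and_congr_right fun hlt => ?_)
    rw [hH, SimpleGraph.cliqueBlowup_adj]
    simp [hlt.ne, ne_of_apply_ne P hlt.ne]
  have hW : Fintype.card (Σ i, Fin (#{v | P v = i} + nn i)) = Fintype.card V + ∑ i, nn i := by
    rw [Fintype.card_sigma, ← card_univ, card_eq_sum_card_fiberwise (f := P) fun _ _ => mem_univ _]
    simp [sum_add_distrib]
  refine hW ▸ rho_le_card (G := Q.cliqueBlowup Sigma.fst) fun c hc => ?_
  rw [hH]
  refine SimpleGraph.exists_rainbow_embedding_cliqueBlowup Q hc fun v => ?_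
  rw [hnn', Finset.card_filter_sigma_fst_eq, Fintype.card_fin]

/-- Replication-clique upper bound: if `V(H)` is partitioned into replication cliques
`C_1, …, C_s` (fibers of `P`), and `nn i` is the number of vertices in earlier cliques
non-adjacent to the vertices of `C_i`, then `ρ(H) ≤ n + Σ_i nn i`. -/
theorem stmt11 {V : Type} [Fintype V] [DecidableEq V]
    (H : SimpleGraph V) [DecidableRel H.Adj]
    (s : ℕ) (P : V → Fin s) (hsurj : Function.Surjective P)
    (hclique : ∀ v w : V, v ≠ w → P v = P w → H.Adj v w)
    (hrepl : ∀ v w u : V, P v = P w → P u ≠ P v → (H.Adj v u ↔ H.Adj w u))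
    (nn : Fin s → ℕ)
    (hnn : ∀ (i : Fin s) (v : V), P v = i →
      nn i = (Finset.univ.filter fun u => P u < i ∧ ¬ H.Adj u v).card) :
    rho H ≤ Fintype.card V + ∑ i : Fin s, nn i :=
  stmt11_general H s P hclique hrepl nn hnn
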